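/- For every automorphism T of the Möbius–Kantor graph MK: if L(T) = 4 then T has order 2 or 3; if L(T) = 2 then T has order 2; and if L(T) = 0 then T is fixed-point free in the sense that T fixes no vertex and maps no edge to itself (neither pointwise nor with its endpoints swapped). -/

import Mathlib

/-- The underlying relation of the Möbius–Kantor graph `GP(8,3)`. -/
def mkRel (v w : ZMod 8 × Fin 2) : Bool :=
  (v.2 == 0 && w.2 == 0 && (w.1 == v.1 + 1 || v.1 == w.1 + 1)) ||
  ((v.2 == 0 && w.2 == 1 || v.2 == 1 && w.2 == 0) && v.1 == w.1) ||
  (v.2 == 1 && w.2 == 1 && (w.1 == v.1 + 3 || v.1 == w.1 + 3))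

/-- The Möbius–Kantor graph, i.e. the generalized Petersen graph `GP(8,3)`. -/
def MK : SimpleGraph (ZMod 8 × Fin 2) where
  Adj v w := mkRel v w = true
  symm := ⟨by intro v w; revert v w; decide⟩
  loopless := ⟨by intro v; revert v; decide⟩

instance : DecidableRel MK.Adj := fun v w => inferInstanceAs (Decidable (mkRel v w = true))

noncomputable instance : Fintype (MK ≃g MK) :=
  Fintype.ofInjective (fun T => T.toEquiv) (fun T S h => by
    cases T; cases S; simpa using h)

/-- The Lefschetz number of a graph automorphism `T` of `MK`: the number of fixed
vertices, minus the number of edges fixed pointwise, plus the number of edges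
mapped to themselves with their endpoints swapped. -/
noncomputable def lefschetz (T : MK ≃g MK) : ℤ :=
  ((Finset.univ.filter fun v : ZMod 8 × Fin 2 => T v = v).card : ℤ)
    - ((MK.edgeFinset.filter fun e => ∀ v ∈ e, T v = v).card : ℤ)
    + ((MK.edgeFinset.filter fun e => Sym2.map T e = e ∧ ¬ ∀ v ∈ e, T v = v).card : ℤ)

/-!
The automorphism group of `MK` has order 96. Rotations and the map `swapRings` exchanging the
two 8-cycles act transitively on the vertices, and the stabiliser of `(0, 0)` acts as `S₃` on its
three neighbours, generated by the reflection and an order-3 automorphism `turn`. An automorphism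
fixing `(0, 0)` and two of its neighbours is the identity: the remaining vertices are pinned down,
in three rounds, by their distances to vertices already known to be fixed. So every automorphism
is one of 96 explicit words in these generators, and the claimed relations between Lefschetz
number, order and fixed vertices and edges are checked on each word by evaluation.
-/

open Finset Function

namespace SimpleGraph

variable {V W : Type*} {G : SimpleGraph V} {G' : SimpleGraph W}

instance Iso.instDecidableEq [Fintype V] [DecidableEq W] : DecidableEq (G ≃g G') :=
  fun f g => decidable_of_iff (∀ v, f v = g v) ⟨fun h => RelIso.ext h, fun h _ => h ▸ rfl⟩

noncomputable def Iso.ofInjective [Finite V] (f : V → V) (hf : Injective f)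
    (hadj : ∀ v w, G.Adj (f v) (f w) ↔ G.Adj v w) : G ≃g G :=
  ⟨.ofBijective f hf.bijective_of_finite, hadj _ _⟩

section closedBall

variable [Fintype V] [DecidableEq V] [DecidableRel G.Adj]
  [Fintype W] [DecidableEq W] [DecidableRel G'.Adj]

variable (G) in
/-- The closed ball of radius `n` as a `Finset`, so that `decide` can evaluate it (Mathlib's
`SimpleGraph.ball` is defined through `edist`). -/
def closedBall : ℕ → V → Finset V
  | 0, v => {v}
  | n + 1, v => let B := closedBall n v; B ∪ B.biUnion fun u => G.neighborFinset u

theorem Iso.apply_mem_closedBall_iff (T : G ≃g G') {n : ℕ} {u w : V} :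
    T w ∈ G'.closedBall n (T u) ↔ w ∈ G.closedBall n u := by
  induction n generalizing w with
  | zero => simp [closedBall]
  | succ n ih =>
    simp only [closedBall, mem_union, mem_biUnion, mem_neighborFinset, ih]
    constructor
    · rintro (h | ⟨x, hx, hadj⟩)
      · exact .inl h
      · refine .inr ⟨T.symm x, ?_, ?_⟩
        · rwa [← ih, T.apply_symm_apply]
        · rwa [← T.map_adj_iff, T.apply_symm_apply]
    · rintro (h | ⟨x, hx, hadj⟩)
      · exact .inl h
      · exact .inr ⟨T x, ih.2 hx, T.map_adj_iff.2 hadj⟩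

variable (G) in
def separatedBy (n : ℕ) (F : Finset V) : Finset V :=
  univ.filter fun v =>
    ∀ w, (∀ u ∈ F, ∀ r ≤ n, w ∈ G.closedBall r u ↔ v ∈ G.closedBall r u) → w = v

theorem Iso.apply_eq_self_of_mem_separatedBy (T : G ≃g G) {n : ℕ} {F : Finset V}
    (hF : ∀ u ∈ F, T u = u) {v : V} (hv : v ∈ G.separatedBy n F) : T v = v := by
  refine (mem_filter.1 hv).2 _ fun u hu r _ => ?_
  simpa only [hF u hu] using T.apply_mem_closedBall_iff (n := r) (u := u) (w := v)

theorem Iso.apply_eq_self_of_mem_iterate_separatedBy (T : G ≃g G) {n : ℕ} {F : Finset V}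
    (hF : ∀ u ∈ F, T u = u) (m : ℕ) {v : V} (hv : v ∈ (G.separatedBy n)^[m] F) : T v = v := by
  induction m generalizing F with
  | zero => exact hF v hv
  | succ m ih =>
    exact ih (fun u hu => T.apply_eq_self_of_mem_separatedBy hF hu) (iterate_succ_apply .. ▸ hv)

end closedBall
end SimpleGraph

open SimpleGraph

namespace MK

noncomputable def rotate (k : ZMod 8) : MK ≃g MK :=
  .ofInjective (fun v => (v.1 + k, v.2)) (by revert k; decide +kernel)
    (by revert k; decide +kernel)

noncomputable def reflect : MK ≃g MK :=
  .ofInjective (fun v => (-v.1, v.2)) (by decide) (by decide)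

noncomputable def swapRings : MK ≃g MK :=
  .ofInjective (fun v => (3 * v.1, 1 - v.2)) (by decide) (by decide)

/-- The order-3 automorphism fixing `(0, 0)` and cycling its neighbours
`(1, 0) ↦ (7, 0) ↦ (0, 1) ↦ (1, 0)`; the two rows list the images of the outer and the inner
vertices. -/
noncomputable def turn : MK ≃g MK :=
  .ofInjective (fun v => ![![(0, 0), (7, 0), (7, 1), (4, 1), (4, 0), (3, 0), (3, 1), (0, 1)],
    ![(1, 0), (6, 0), (2, 1), (1, 1), (5, 0), (2, 0), (6, 1), (5, 1)]] v.2 v.1)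
    (by decide) (by decide)

noncomputable def word (k : ZMod 8) (ε δ : Fin 2) (j : Fin 3) : MK ≃g MK :=
  rotate k * swapRings ^ (ε : ℕ) * reflect ^ (δ : ℕ) * turn ^ (j : ℕ)

theorem mem_iterate_separatedBy (v : ZMod 8 × Fin 2) :
    v ∈ (MK.separatedBy 3)^[3] {(0, 0), (1, 0), (0, 1)} := by
  revert v; decide +kernel

theorem eq_one_of_apply_eq_self (T : MK ≃g MK) (h₀ : T (0, 0) = (0, 0)) (h₁ : T (1, 0) = (1, 0))
    (h₂ : T (0, 1) = (0, 1)) : T = 1 :=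
  RelIso.ext fun v => T.apply_eq_self_of_mem_iterate_separatedBy (by simp [h₀, h₁, h₂]) 3
    (mem_iterate_separatedBy v)

theorem exists_word_apply (a b c : ZMod 8 × Fin 2) (hb : MK.Adj a b) (hc : MK.Adj a c)
    (hbc : b ≠ c) :
    ∃ k ε δ j, word k ε δ j (0, 0) = a ∧ word k ε δ j (1, 0) = b ∧ word k ε δ j (0, 1) = c := by
  revert a b c; decide +kernel

theorem exists_eq_word (T : MK ≃g MK) : ∃ k ε δ j, T = word k ε δ j := by
  obtain ⟨k, ε, δ, j, h₀, h₁, h₂⟩ := exists_word_apply (T (0, 0)) (T (1, 0)) (T (0, 1))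
    (T.map_adj_iff.2 (by decide)) (T.map_adj_iff.2 (by decide)) (T.injective.ne (by decide))
  refine ⟨k, ε, δ, j, inv_mul_eq_one.1 (eq_one_of_apply_eq_self _ ?_ ?_ ?_)⟩ <;>
    simp [RelIso.mul_apply, h₀, h₁, h₂]

end MK

theorem lefschetz_one : lefschetz 1 = -8 := by decide

set_option synthInstance.maxSize 1024 in
theorem lefschetz_cases (T : MK ≃g MK) :
    (lefschetz T = 4 → T ^ 2 = 1 ∨ T ^ 3 = 1) ∧ (lefschetz T = 2 → T ^ 2 = 1) ∧
    (lefschetz T = 0 → (∀ v, T v ≠ v) ∧ ∀ e ∈ MK.edgeFinset, Sym2.map T e ≠ e) := by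
  obtain ⟨k, ε, δ, j, rfl⟩ := MK.exists_eq_word T
  revert k ε δ j
  decide +kernel

theorem ne_one_of_lefschetz_ne {T : MK ≃g MK} (h : lefschetz T ≠ -8) : T ≠ 1 := by
  rintro rfl
  exact h lefschetz_one

/-- Automorphisms of `MK` with Lefschetz number 4 have order 2 or 3, those with
Lefschetz number 2 have order 2, and those with Lefschetz number 0 fix no vertex and
map no edge to itself. -/
theorem lefschetz_order_moebiusKantor (T : MK ≃g MK) :
    (lefschetz T = 4 → orderOf T = 2 ∨ orderOf T = 3) ∧
    (lefschetz T = 2 → orderOf T = 2) ∧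
    (lefschetz T = 0 → (∀ v, T v ≠ v) ∧ ∀ e ∈ MK.edgeSet, Sym2.map T e ≠ e) := by
  obtain ⟨h₄, h₂, h₀⟩ := lefschetz_cases T
  refine ⟨fun hL => ?_, fun hL => ?_, fun hL => ?_⟩
  · have hT : T ≠ 1 := ne_one_of_lefschetz_ne (by rw [hL]; decide)
    exact (h₄ hL).imp (orderOf_eq_prime · hT) (orderOf_eq_prime · hT)
  · exact orderOf_eq_prime (h₂ hL) (ne_one_of_lefschetz_ne (by rw [hL]; decide))
  · obtain ⟨hv, he⟩ := h₀ hL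
    exact ⟨hv, fun e he' => he e (mem_edgeFinset.2 he')⟩
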